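/- Let n ≥ 4 and 0 < α ≤ log_{n−2}((n²−n−2)/(n²−n−4)). Then a simple graph G on n vertices maximizes σ_t^α among all simple graphs on n vertices if and only if G is antiregular. -/

import Mathlib

open Finset

/-- The degree of a vertex: the number of its neighbors. -/
noncomputable def deg {n : ℕ} (G : SimpleGraph (Fin n)) (v : Fin n) : ℕ :=
  Nat.card {u | G.Adj v u}

/-- `σ_t^α(G) = Σ_{{u,v}⊆V(G)} |d(u)−d(v)|^α`, summed over unordered pairs of
distinct vertices. -/
noncomputable def sigmaT {n : ℕ} (G : SimpleGraph (Fin n)) (α : ℝ) : ℝ :=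
  ∑ i : Fin n, ∑ j ∈ Finset.Ioi i, |((deg G i : ℝ)) - (deg G j : ℝ)| ^ α

/-- A graph on `n` vertices is antiregular if its vertices realize exactly
`n − 1` distinct degree values. -/
def IsAntiregular {n : ℕ} (G : SimpleGraph (Fin n)) : Prop :=
  (Finset.univ.image (deg G)).card = n - 1

/-!
Let `N = n(n-1)/2` be the number of vertex pairs. A term `|d(u) - d(v)|^α` vanishes when the
degrees agree and otherwise lies in `[1, (n-2)^α]`, because no graph has both a vertex of degree
`0` and one of degree `n-1`. For the same reason a graph that is not antiregular has at most
`n-2` distinct degrees, hence at least two pairs of equal degree, and `σ ≤ (N-2)(n-2)^α ≤ N-1`;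
the last step is exactly the bound on `α`. An antiregular graph has a single pair of equal degree
and a pair whose degrees differ by at least `2`, so `σ ≥ N-2+2^α > N-1`.

It remains to see that all antiregular graphs have the same `σ`. Complementation preserves `σ`,
so we may assume the degrees are `0, …, n-2` plus one repeated value `r`. The vertex of degree
`n-2` is adjacent to everything but the isolated vertex; deleting both leaves a graph of the same
kind on `n-2` vertices with repeated degree `r-1`, and by induction `r = ⌊(n-1)/2⌋`.
-/

theorem Multiset.range_add_one_eq_cons_map (n : ℕ) :
    range (n + 1) = 0 ::ₘ (range n).map (· + 1) := by
  simp [range, List.range_succ_eq_map]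

theorem Finset.univ_val_eq_cons_cons_filter {V : Type*} [Fintype V] [DecidableEq V] {z w : V}
    (hzw : z ≠ w) : (univ : Finset V).val = z ::ₘ w ::ₘ ({u | u ≠ z ∧ u ≠ w} : Finset V).val := by
  rw [← insert_val_of_notMem (s := {u | u ≠ z ∧ u ≠ w}) (by simp),
    ← insert_val_of_notMem (by simp [hzw])]
  congr 1
  ext u
  simp only [mem_univ, mem_insert, mem_filter, true_iff]
  tauto

theorem Finset.card_le_of_forall_le_add {s : Finset ℕ} {k : ℕ}
    (h : ∀ a ∈ s, ∀ b ∈ s, a ≤ b + k) : #s ≤ k + 1 := by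
  rcases s.eq_empty_or_nonempty with rfl | hs
  · simp
  have := card_le_card (t := Icc (s.min' hs) (s.min' hs + k)) fun a ha =>
    mem_Icc.2 ⟨s.min'_le a ha, h a ha _ (s.min'_mem hs)⟩
  rw [Nat.card_Icc] at this
  omega

theorem one_le_abs_natCast_sub {a b : ℕ} (h : a ≠ b) : (1 : ℝ) ≤ |(a : ℝ) - b| := by
  have : (1 : ℤ) ≤ |(a : ℤ) - b| := Int.one_le_abs (by omega)
  exact_mod_cast this

namespace SimpleGraph

variable {V : Type*} [Fintype V] (G : SimpleGraph V) [DecidableRel G.Adj]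

theorem degree_le_degree_add_card_sub_two (u v : V) :
    G.degree u ≤ G.degree v + (Fintype.card V - 2) := by
  by_cases huv : u = v
  · subst huv; omega
  by_cases hu : G.IsUniversal u
  · have := (hu huv).symm.degree_pos_left
    have := G.degree_lt_card_verts u
    omega
  · have := (G.degree_lt_card_sub_one u).2 hu
    omega

variable [DecidableEq V]

theorem neighborFinset_subset_erase_erase {u v : V} (h : ¬G.Adj u v) :
    G.neighborFinset u ⊆ (univ.erase u).erase v := fun x hx => by
  rw [mem_neighborFinset] at hx
  simp only [mem_erase, mem_univ, and_true]
  exact ⟨fun hxv => h (hxv ▸ hx), hx.ne'⟩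

theorem degree_le_card_sub_two_of_not_adj {u v : V} (huv : u ≠ v) (h : ¬G.Adj u v) :
    G.degree u ≤ Fintype.card V - 2 := by
  have := card_le_card (G.neighborFinset_subset_erase_erase h)
  rwa [card_erase_of_mem (by simpa using huv.symm), card_erase_of_mem (mem_univ u),
    card_univ] at this

theorem adj_of_degree_eq_card_sub_two {w z : V} (hwz : w ≠ z) (hz : ¬G.Adj w z)
    (hw : G.degree w = Fintype.card V - 2) {u : V} (huw : u ≠ w) (huz : u ≠ z) :
    G.Adj w u := by
  have heq := eq_of_subset_of_card_le (G.neighborFinset_subset_erase_erase hz) (by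
    rw [card_erase_of_mem (by simpa using hwz.symm), card_erase_of_mem (mem_univ w),
      card_univ, card_neighborFinset_eq_degree, hw, Nat.sub_sub])
  have : u ∈ G.neighborFinset w := heq ▸ by simp [huw, huz]
  exact (G.mem_neighborFinset w u).1 this

theorem degree_induce_add_one {s : Set V} [DecidablePred (· ∈ s)] {w : V} (hw : w ∉ s)
    (hs : ∀ u ∈ s, ∀ x, G.Adj u x → x = w ∨ x ∈ s) (hws : ∀ u ∈ s, G.Adj u w) (u : s) :
    (G.induce s).degree u + 1 = G.degree u := by
  rw [← card_neighborFinset_eq_degree, ← card_map (.subtype (· ∈ s)), map_neighborFinset_induce,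
    ← card_neighborFinset_eq_degree]
  have : G.neighborFinset u ∩ s.toFinset = (G.neighborFinset u).erase w := by
    ext x
    simp only [mem_inter, Set.mem_toFinset, mem_erase, mem_neighborFinset]
    constructor
    · rintro ⟨hx, hxs⟩; exact ⟨fun h => hw (h ▸ hxs), hx⟩
    · rintro ⟨hxw, hx⟩; exact ⟨hx, (hs u u.2 x hx).resolve_left hxw⟩
  rw [this, card_erase_add_one ((mem_neighborFinset _ _ _).2 (hws u u.2))]

theorem map_degree_eq_cons_cons_map_induce {z w : V} (hzw : z ≠ w) (hz : ∀ u, ¬G.Adj u z)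
    (hw : ∀ u, u ≠ z → u ≠ w → G.Adj u w) :
    univ.val.map (fun v => G.degree v) = G.degree z ::ₘ G.degree w ::ₘ
      (univ.val.map fun u : ({u | u ≠ z ∧ u ≠ w} : Set V) =>
        (G.induce {u | u ≠ z ∧ u ≠ w}).degree u).map (· + 1) := by
  have hdeg := G.degree_induce_add_one (s := {u | u ≠ z ∧ u ≠ w}) (w := w) (by simp)
    (fun u _ x hx => by
      by_cases hxw : x = w
      · exact .inl hxw
      · exact .inr ⟨fun hxz => hz u (hxz ▸ hx), hxw⟩)
    (fun u hu => hw u hu.1 hu.2)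
  simp_rw [Multiset.map_map, Function.comp_def, hdeg]
  rw [univ_val_eq_cons_cons_filter hzw, Multiset.map_cons, Multiset.map_cons]
  exact congrArg _ (congrArg _ (univ_val_map_subtype_restrict _ _).symm)

theorem eq_half_of_map_degree_eq_cons_range {r : ℕ}
    (h : univ.val.map (fun v => G.degree v) = r ::ₘ Multiset.range (Fintype.card V - 1)) :
    r = (Fintype.card V - 1) / 2 := by
  induction hV : Fintype.card V using Nat.twoStepInduction generalizing V r with
  | zero => simpa [hV] using congrArg Multiset.card h
  | one =>
    obtain ⟨v, -, rfl⟩ := Multiset.mem_map.1 (h ▸ Multiset.mem_cons_self _ _)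
    have := G.degree_lt_card_verts v
    omega
  | more k ih _ =>
    rw [hV, show k + 2 - 1 = k + 1 from rfl] at h
    have hmem : ∀ a ∈ r ::ₘ Multiset.range (k + 1), ∃ v, G.degree v = a := fun a ha => by
      obtain ⟨v, -, hv⟩ := Multiset.mem_map.1 (h ▸ ha)
      exact ⟨v, hv⟩
    obtain ⟨z, hz⟩ := hmem 0 (Multiset.mem_cons_of_mem (Multiset.mem_range.2 k.succ_pos))
    have hzadj : ∀ u, ¬G.Adj u z := fun u hu => by simpa [hz] using hu.degree_pos_right
    rcases k with _ | j
    · obtain ⟨v, rfl⟩ := hmem r (Multiset.mem_cons_self _ _)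
      by_cases hvz : v = z
      · exact hvz ▸ hz
      · have := G.degree_le_card_sub_two_of_not_adj hvz (hzadj v)
        omega
    obtain ⟨w, hw⟩ := hmem (j + 1) (by simp)
    have hwz : w ≠ z := by rintro rfl; omega
    have hwadj : ∀ u, u ≠ z → u ≠ w → G.Adj u w := fun u huz huw =>
      (G.adj_of_degree_eq_card_sub_two hwz (hzadj w) (by omega) huw huz).symm
    -- Cancelling the degrees `0` of `z` and `j + 1` of `w` leaves the degrees of the graph induced
    -- on the other vertices, each raised by one.
    rw [G.map_degree_eq_cons_cons_map_induce hwz.symm hzadj hwadj, hz, hw, Multiset.range_succ,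
      Multiset.range_add_one_eq_cons_map, Multiset.cons_swap r, Multiset.cons_swap r,
      Multiset.cons_swap (j + 1) 0, Multiset.cons_inj_right, Multiset.cons_inj_right] at h
    obtain ⟨r', -, rfl⟩ := Multiset.mem_map.1 (h ▸ Multiset.mem_cons_self _ _)
    rw [← Multiset.map_cons (· + 1)] at h
    have hH := Multiset.map_injective (add_left_injective 1) h
    have hcard : Fintype.card ({u | u ≠ z ∧ u ≠ w} : Set V) = j + 1 := by
      simpa using congrArg Multiset.card hH
    have := ih _ (by rwa [hcard]) hcard
    omega

end SimpleGraph

section Pairs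

theorem exists_mem_filter_lt_of_ne {α : Type*} [Fintype α] [LinearOrder α] (r : α → α → Prop)
    [DecidableRel r] {x y : α} (hxy : x ≠ y) (h : r x y) (h' : r y x) :
    ∃ p ∈ ({p : α × α | p.1 < p.2 ∧ r p.1 p.2} : Finset _), p = (x, y) ∨ p = (y, x) := by
  rcases hxy.lt_or_gt with hlt | hlt
  · exact ⟨(x, y), by simp [hlt, h], .inl rfl⟩
  · exact ⟨(y, x), by simp [hlt, h'], .inr rfl⟩

variable {α β : Type*} [Fintype α] [LinearOrder α] [DecidableEq β] (f : α → β)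

theorem card_filter_ne_add_card_filter_eq :
    #{p : α × α | p.1 < p.2 ∧ f p.1 ≠ f p.2} + #{p : α × α | p.1 < p.2 ∧ f p.1 = f p.2} =
      (Fintype.card α).choose 2 := by
  rw [← filter_filter, ← filter_filter, add_comm, card_filter_add_card_filter_not,
    Fintype.card_product_filter_lt]

theorem two_le_card_filter_eq_of_card_image (h : #(univ.image f) + 2 ≤ Fintype.card α) :
    2 ≤ #{p : α × α | p.1 < p.2 ∧ f p.1 = f p.2} := by
  have hmaps (s : Finset α) : ∀ a ∈ s, f a ∈ univ.image f := fun a _ =>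
    mem_image_of_mem f (mem_univ a)
  obtain ⟨x, -, y, -, hxy, hfxy⟩ :=
    exists_ne_map_eq_of_card_lt_of_maps_to (by rw [card_univ]; omega) (hmaps univ)
  obtain ⟨k, hk, l, hl, hkl, hfkl⟩ := exists_ne_map_eq_of_card_lt_of_maps_to
    (by rw [card_erase_of_mem (mem_univ x), card_univ]; omega) (hmaps (univ.erase x))
  obtain ⟨p, hp, hpxy⟩ := exists_mem_filter_lt_of_ne (f · = f ·) hxy hfxy hfxy.symm
  obtain ⟨q, hq, hqkl⟩ := exists_mem_filter_lt_of_ne (f · = f ·) hkl hfkl hfkl.symm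
  refine one_lt_card.2 ⟨p, hp, q, hq, ?_⟩
  rintro rfl
  simp only [mem_erase, mem_univ, and_true] at hk hl
  rcases hpxy with rfl | rfl <;> rcases hqkl with h | h <;> simp_all [Prod.ext_iff]

theorem injOn_erase_of_card_image {x y : α} (h : #(univ.image f) + 1 = Fintype.card α)
    (hxy : x ≠ y) (hf : f x = f y) : Set.InjOn f (univ.erase y) := by
  have himage : (univ.erase y).image f = univ.image f := by
    refine (image_subset_image (erase_subset _ _)).antisymm fun t ht => ?_
    obtain ⟨u, -, rfl⟩ := mem_image.1 ht
    by_cases huy : u = y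
    · exact mem_image.2 ⟨x, mem_erase.2 ⟨hxy, mem_univ _⟩, huy ▸ hf⟩
    · exact mem_image_of_mem f (mem_erase.2 ⟨huy, mem_univ _⟩)
  exact injOn_of_card_image_eq (by rw [himage, card_erase_of_mem (mem_univ _), card_univ]; omega)

theorem card_filter_eq_le_one_of_card_image (h : #(univ.image f) + 1 = Fintype.card α) :
    #{p : α × α | p.1 < p.2 ∧ f p.1 = f p.2} ≤ 1 := by
  rw [card_le_one]
  rintro ⟨a, b⟩ hab ⟨c, d⟩ hcd
  simp only [mem_filter, mem_univ, true_and] at hab hcd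
  have hmem : ∀ x y, x ≠ y → f x = f y → y = c ∨ y = d := fun x y hxy hf => by
    by_contra! hne
    exact hcd.1.ne (injOn_erase_of_card_image f h hxy hf (by simp [hne.1.symm])
      (by simp [hne.2.symm]) hcd.2)
  rcases hmem a b hab.1.ne hab.2 with rfl | rfl <;>
    rcases hmem b a hab.1.ne' hab.2.symm with rfl | rfl
  all_goals first | rfl | order

end Pairs

section FinGraph

variable {n : ℕ}

section Degrees

variable (G : SimpleGraph (Fin n))

theorem deg_eq_degree [DecidableRel G.Adj] (v : Fin n) : deg G v = G.degree v := by
  rw [deg, ← G.card_neighborSet_eq_degree, Nat.card_eq_fintype_card]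
  rfl

theorem deg_lt (v : Fin n) : deg G v < n := by
  classical
  simpa [deg_eq_degree] using G.degree_lt_card_verts v

theorem deg_le_deg_add (u v : Fin n) : deg G u ≤ deg G v + (n - 2) := by
  classical
  simpa [deg_eq_degree] using G.degree_le_degree_add_card_sub_two u v

theorem deg_compl (v : Fin n) : deg Gᶜ v = n - 1 - deg G v := by
  classical
  simp [deg_eq_degree, SimpleGraph.degree_compl]

theorem abs_deg_sub_deg_le (hn : 2 ≤ n) (u v : Fin n) : |(deg G u : ℝ) - deg G v| ≤ n - 2 := by
  have h1 : (deg G u : ℝ) ≤ deg G v + (n - 2 : ℕ) := by exact_mod_cast deg_le_deg_add G u v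
  have h2 : (deg G v : ℝ) ≤ deg G u + (n - 2 : ℕ) := by exact_mod_cast deg_le_deg_add G v u
  rw [Nat.cast_sub hn, Nat.cast_two] at h1 h2
  rw [abs_sub_le_iff]
  constructor <;> linarith

theorem card_image_deg_le (hn : 2 ≤ n) : #(univ.image (deg G)) ≤ n - 1 := by
  have := card_le_of_forall_le_add (s := univ.image (deg G)) (k := n - 2) (by
    simp only [mem_image, mem_univ, true_and]
    rintro _ ⟨u, rfl⟩ _ ⟨v, rfl⟩
    exact deg_le_deg_add G u v)
  omega

end Degrees

section Antiregular

variable {G : SimpleGraph (Fin n)}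

theorem IsAntiregular.compl (hG : IsAntiregular G) : IsAntiregular Gᶜ := by
  unfold IsAntiregular at *
  have : univ.image (deg Gᶜ) = (univ.image (deg G)).image (n - 1 - ·) := by
    rw [image_image]
    exact image_congr fun v _ => deg_compl G v
  rw [this, card_image_of_injOn, hG]
  simp only [Set.InjOn, coe_image, coe_univ, Set.image_univ, Set.mem_range]
  rintro _ ⟨u, rfl⟩ _ ⟨v, rfl⟩ h
  have := deg_lt G u
  have := deg_lt G v
  omega

theorem IsAntiregular.zero_mem_image_or (hn : 2 ≤ n) (hG : IsAntiregular G) :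
    0 ∈ univ.image (deg G) ∨ 0 ∈ univ.image (deg Gᶜ) := by
  by_cases h0 : 0 ∈ univ.image (deg G)
  · exact .inl h0
  right
  have hsub : univ.image (deg G) ⊆ Icc 1 (n - 1) := fun a ha => by
    obtain ⟨v, -, rfl⟩ := mem_image.1 ha
    have := deg_lt G v
    have : deg G v ≠ 0 := fun h => h0 (h ▸ mem_image_of_mem _ (mem_univ v))
    simp only [mem_Icc]
    omega
  have heq := eq_of_subset_of_card_le hsub (by rw [Nat.card_Icc, hG]; omega)
  obtain ⟨v, -, hv⟩ := mem_image.1 (heq ▸ mem_Icc.2 ⟨by omega, le_rfl⟩ : n - 1 ∈ univ.image (deg G))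
  exact mem_image.2 ⟨v, mem_univ v, by rw [deg_compl, hv, Nat.sub_self]⟩

theorem IsAntiregular.map_deg_eq (hn : 2 ≤ n) (hG : IsAntiregular G)
    (h0 : 0 ∈ univ.image (deg G)) :
    univ.val.map (deg G) = (n - 1) / 2 ::ₘ Multiset.range (n - 1) := by
  have himage : univ.image (deg G) = range (n - 1) := by
    obtain ⟨z, -, hz⟩ := mem_image.1 h0
    refine eq_of_subset_of_card_le (fun a ha => ?_) (by rw [card_range, hG])
    obtain ⟨v, -, rfl⟩ := mem_image.1 ha
    have := deg_le_deg_add G v z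
    rw [mem_range]
    omega
  obtain ⟨t, ht⟩ := Multiset.le_iff_exists_add.1 (Multiset.dedup_le (univ.val.map (deg G)))
  rw [← image_val, himage, range_val] at ht
  obtain ⟨r, rfl⟩ : ∃ r, t = {r} := Multiset.card_eq_one.1 (by
    have := congrArg Multiset.card ht
    simp only [Multiset.card_map, card_val, card_univ, Fintype.card_fin, Multiset.card_add,
      Multiset.card_range] at this
    omega)
  rw [add_comm, Multiset.singleton_add] at ht
  classical
  have := G.eq_half_of_map_degree_eq_cons_range (r := r)
    (by simpa [← deg_eq_degree, Fintype.card_fin] using ht)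
  rw [ht, this, Fintype.card_fin]

theorem IsAntiregular.exists_deg_add_two_le (hn : 4 ≤ n) (hG : IsAntiregular G) :
    ∃ u v, deg G u + 2 ≤ deg G v := by
  by_contra! h
  have := card_le_of_forall_le_add (s := univ.image (deg G)) (k := 1) (by
    simp only [mem_image, mem_univ, true_and]
    rintro _ ⟨u, rfl⟩ _ ⟨v, rfl⟩
    have := h v u
    omega)
  unfold IsAntiregular at hG
  omega

end Antiregular

section Sigma

variable (G : SimpleGraph (Fin n)) (α : ℝ)

theorem sigmaT_compl : sigmaT Gᶜ α = sigmaT G α := by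
  refine sum_congr rfl fun i _ => sum_congr rfl fun j _ => ?_
  have hi := deg_lt G i
  have hj := deg_lt G j
  rw [deg_compl, deg_compl, Nat.cast_sub (by omega : deg G i ≤ n - 1),
    Nat.cast_sub (by omega : deg G j ≤ n - 1), sub_sub_sub_cancel_left, abs_sub_comm]

theorem two_mul_sigmaT :
    2 * sigmaT G α = ((univ.val.map (deg G)).map fun a : ℕ =>
      ((univ.val.map (deg G)).map fun b : ℕ => |(b : ℝ) - a| ^ α).sum - |(a : ℝ) - a| ^ α).sum := by
  have hsymm (i j : Fin n) : 2 * |(deg G i : ℝ) - deg G j| ^ α =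
      |(deg G j : ℝ) - deg G i| ^ α + |(deg G i : ℝ) - deg G j| ^ α := by
    rw [abs_sub_comm]
    ring
  rw [sigmaT, mul_sum]
  simp_rw [mul_sum, hsymm]
  rw [sum_sum_Ioi_add_eq_sum_sum_off_diag]
  simp only [Multiset.map_map, Function.comp_def, sum_map_val]
  refine sum_congr rfl fun i _ => ?_
  rw [eq_sub_iff_add_eq, ← sum_singleton (fun j => |(deg G j : ℝ) - deg G i| ^ α) i,
    sum_compl_add_sum]

theorem sigmaT_eq_of_map_deg_eq {H : SimpleGraph (Fin n)}
    (h : univ.val.map (deg G) = univ.val.map (deg H)) : sigmaT G α = sigmaT H α := by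
  have := two_mul_sigmaT G α
  rw [h, ← two_mul_sigmaT H α] at this
  linarith

variable {G α}

theorem sigmaT_eq_sum_filter_ne (hα : α ≠ 0) :
    sigmaT G α = ∑ p ∈ {p : Fin n × Fin n | p.1 < p.2 ∧ deg G p.1 ≠ deg G p.2},
      |(deg G p.1 : ℝ) - deg G p.2| ^ α := by
  rw [← filter_filter, sum_filter_of_ne, sum_filter, Fintype.sum_prod_type, sigmaT]
  · exact sum_congr rfl fun i _ => by rw [← sum_filter, filter_lt_eq_Ioi]
  · rintro p - hp h
    simp [h, Real.zero_rpow hα] at hp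

theorem sigmaT_eq_of_isAntiregular (hn : 2 ≤ n) {H : SimpleGraph (Fin n)} (hG : IsAntiregular G)
    (hH : IsAntiregular H) : sigmaT G α = sigmaT H α := by
  have hcanon (G : SimpleGraph (Fin n)) (hG : IsAntiregular G) : ∃ G' : SimpleGraph (Fin n),
      sigmaT G' α = sigmaT G α ∧
        univ.val.map (deg G') = (n - 1) / 2 ::ₘ Multiset.range (n - 1) := by
    rcases hG.zero_mem_image_or hn with h0 | h0
    · exact ⟨G, rfl, hG.map_deg_eq hn h0⟩
    · exact ⟨Gᶜ, sigmaT_compl G α, hG.compl.map_deg_eq hn h0⟩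
  obtain ⟨G', hG', hG'deg⟩ := hcanon G hG
  obtain ⟨H', hH', hH'deg⟩ := hcanon H hH
  rw [← hG', ← hH', sigmaT_eq_of_map_deg_eq G' α (hG'deg.trans hH'deg.symm)]

theorem sigmaT_le_of_not_isAntiregular (hn : 2 ≤ n) (hα : 0 < α) (hG : ¬IsAntiregular G) :
    sigmaT G α ≤ ((n.choose 2 : ℝ) - 2) * ((n : ℝ) - 2) ^ α := by
  have hcard := card_filter_ne_add_card_filter_eq (deg G)
  have h2 := two_le_card_filter_eq_of_card_image (deg G) (by
    have := card_image_deg_le G hn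
    unfold IsAntiregular at hG
    rw [Fintype.card_fin]
    omega)
  rw [Fintype.card_fin] at hcard
  have hQ : #{p : Fin n × Fin n | p.1 < p.2 ∧ deg G p.1 ≠ deg G p.2} + 2 ≤ n.choose 2 := by
    omega
  rw [sigmaT_eq_sum_filter_ne hα.ne']
  calc _ ≤ ∑ p ∈ {p : Fin n × Fin n | p.1 < p.2 ∧ deg G p.1 ≠ deg G p.2}, ((n : ℝ) - 2) ^ α :=
        sum_le_sum fun p _ => Real.rpow_le_rpow (abs_nonneg _) (abs_deg_sub_deg_le G hn _ _) hα.le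
    _ ≤ _ := by
        rw [sum_const, nsmul_eq_mul]
        refine mul_le_mul_of_nonneg_right (by rw [le_sub_iff_add_le]; exact_mod_cast hQ)
          (Real.rpow_nonneg ?_ _)
        linarith [(Nat.ofNat_le_cast (α := ℝ)).2 hn]

theorem sigmaT_ge_of_isAntiregular (hn : 4 ≤ n) (hα : 0 < α) (hG : IsAntiregular G) :
    (n.choose 2 : ℝ) - 2 + 2 ^ α ≤ sigmaT G α := by
  have hcard := card_filter_ne_add_card_filter_eq (deg G)
  have h1 := card_filter_eq_le_one_of_card_image (deg G) (by rw [hG, Fintype.card_fin]; omega)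
  rw [Fintype.card_fin] at hcard
  set Q : Finset (Fin n × Fin n) := {p | p.1 < p.2 ∧ deg G p.1 ≠ deg G p.2}
  obtain ⟨u, v, huv⟩ := hG.exists_deg_add_two_le hn
  obtain ⟨p, hp, hpuv⟩ := exists_mem_filter_lt_of_ne (deg G · ≠ deg G ·)
    (x := u) (y := v) (by rintro rfl; omega) (by omega) (by omega)
  have hgap : 2 ^ α ≤ |(deg G p.1 : ℝ) - deg G p.2| ^ α := by
    refine Real.rpow_le_rpow (by norm_num) ?_ hα.le
    have : (deg G u : ℝ) + 2 ≤ deg G v := by exact_mod_cast huv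
    rcases hpuv with rfl | rfl
    · rw [abs_sub_comm]; exact le_abs.2 (.inl (by linarith))
    · exact le_abs.2 (.inl (by linarith))
  have hone : ∀ q ∈ Q.erase p, 1 ≤ |(deg G q.1 : ℝ) - deg G q.2| ^ α := fun q hq =>
    Real.one_le_rpow (one_le_abs_natCast_sub (mem_filter.1 (mem_of_mem_erase hq)).2.2) hα.le
  have hrest := card_nsmul_le_sum _ _ _ hone
  rw [card_erase_of_mem hp, nsmul_eq_mul, mul_one, Nat.cast_sub (card_pos.2 ⟨p, hp⟩)] at hrest
  have hQ : (n.choose 2 : ℝ) ≤ #Q + 1 := by exact_mod_cast (by omega : n.choose 2 ≤ #Q + 1)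
  rw [sigmaT_eq_sum_filter_ne hα.ne', ← add_sum_erase _ _ hp]
  push_cast at hrest
  linarith

end Sigma

theorem choose_two_sub_two_mul_rpow_le {α : ℝ} (hn : 4 ≤ n)
    (hα : α ≤ Real.logb ((n : ℝ) - 2) (((n : ℝ) ^ 2 - n - 2) / ((n : ℝ) ^ 2 - n - 4))) :
    ((n.choose 2 : ℝ) - 2) * ((n : ℝ) - 2) ^ α ≤ n.choose 2 - 1 := by
  have hn' : (4 : ℝ) ≤ n := by exact_mod_cast hn
  have hden : (0 : ℝ) < (n : ℝ) ^ 2 - n - 4 := by nlinarith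
  have hpow : ((n : ℝ) - 2) ^ α ≤ ((n : ℝ) ^ 2 - n - 2) / ((n : ℝ) ^ 2 - n - 4) := by
    refine (Real.rpow_le_rpow_of_exponent_le (by linarith) hα).trans_eq ?_
    exact Real.rpow_logb (by linarith) (by linarith) (div_pos (by linarith) hden)
  rw [Nat.cast_choose_two]
  calc _ ≤ ((n : ℝ) * (n - 1) / 2 - 2) * (((n : ℝ) ^ 2 - n - 2) / ((n : ℝ) ^ 2 - n - 4)) :=
        mul_le_mul_of_nonneg_left hpow (by nlinarith)
    _ = _ := by
        rw [show (n : ℝ) * (n - 1) / 2 - 2 = ((n : ℝ) ^ 2 - n - 4) / 2 by ring, div_mul_div_comm,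
          mul_comm ((n : ℝ) ^ 2 - n - 4), mul_div_mul_right _ _ hden.ne']
        ring

def antiregularGraph (n : ℕ) : SimpleGraph (Fin n) where
  Adj i j := i ≠ j ∧ n ≤ i.val + j.val
  symm := ⟨fun _ _ h => ⟨h.1.symm, by omega⟩⟩
  loopless := ⟨fun _ h => h.1 rfl⟩

theorem deg_antiregularGraph (i : Fin n) :
    deg (antiregularGraph n) i = if n ≤ 2 * i.val then i.val - 1 else i.val := by
  classical
  have hT : #{j : Fin n | n - i ≤ (j : ℕ)} = i := by
    have := card_filter_add_card_filter_not (s := univ) (fun j : Fin n => (j : ℕ) < n - i)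
    simp only [Fin.card_filter_val_lt, card_univ, Fintype.card_fin, not_lt] at this
    omega
  set T : Finset (Fin n) := {j | n - i ≤ (j : ℕ)}
  have hadj (j : Fin n) : (antiregularGraph n).Adj i j ↔ (i : ℕ) ≠ j ∧ j ∈ T := by
    simp only [antiregularGraph, T, mem_filter, mem_univ, true_and, ne_eq, Fin.ext_iff]
    omega
  rw [deg_eq_degree, ← SimpleGraph.card_neighborFinset_eq_degree]
  split_ifs with h
  · have hiT : i ∈ T := by simp only [T, mem_filter, mem_univ, true_and]; omega
    rw [show (antiregularGraph n).neighborFinset i = T.erase i by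
        ext j; simp [hadj, Fin.ext_iff, eq_comm],
      card_erase_of_mem hiT, hT]
  · have hiT : i ∉ T := by simp only [T, mem_filter, mem_univ, true_and]; omega
    rw [show (antiregularGraph n).neighborFinset i = T by
        ext j; simp only [SimpleGraph.mem_neighborFinset, hadj, and_iff_right_iff_imp]
        exact fun hj hij => hiT (Fin.ext hij ▸ hj),
      hT]

theorem isAntiregular_antiregularGraph (hn : 2 ≤ n) : IsAntiregular (antiregularGraph n) := by
  suffices univ.image (deg (antiregularGraph n)) = range (n - 1) by
    rw [IsAntiregular, this, card_range]
  ext a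
  simp only [mem_image, mem_univ, true_and, mem_range, deg_antiregularGraph]
  constructor
  · rintro ⟨i, rfl⟩
    have := i.isLt
    split_ifs <;> omega
  · intro ha
    by_cases h : n ≤ 2 * a
    · exact ⟨⟨a + 1, by omega⟩, by simp only; split_ifs <;> omega⟩
    · exact ⟨⟨a, by omega⟩, by simp [h]⟩

end FinGraph

/-- Let `n ≥ 4` and `0 < α ≤ log_{n−2}((n²−n−2)/(n²−n−4))`. A simple graph `G`
on `n` vertices maximizes `σ_t^α` among all simple graphs on `n` vertices if
and only if `G` is antiregular. -/
theorem stmt_4 (n : ℕ) (hn : 4 ≤ n) (α : ℝ) (hα0 : 0 < α)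
    (hα1 : α ≤ Real.logb ((n : ℝ) - 2)
        (((n : ℝ) ^ 2 - n - 2) / ((n : ℝ) ^ 2 - n - 4)))
    (G : SimpleGraph (Fin n)) :
    (∀ H : SimpleGraph (Fin n), sigmaT H α ≤ sigmaT G α) ↔ IsAntiregular G := by
  have hA := isAntiregular_antiregularGraph (by omega : 2 ≤ n)
  have hlt (H : SimpleGraph (Fin n)) (hH : ¬IsAntiregular H) :
      sigmaT H α < sigmaT (antiregularGraph n) α := by
    have : (1 : ℝ) < 2 ^ α := Real.one_lt_rpow (by norm_num) hα0
    linarith [sigmaT_le_of_not_isAntiregular (by omega) hα0 hH,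
      choose_two_sub_two_mul_rpow_le hn hα1, sigmaT_ge_of_isAntiregular hn hα0 hA]
  refine ⟨fun hmax => ?_, fun hG H => ?_⟩
  · by_contra hG
    exact (hlt G hG).not_ge (hmax _)
  · rw [sigmaT_eq_of_isAntiregular (by omega) hG hA]
    by_cases hH : IsAntiregular H
    · rw [sigmaT_eq_of_isAntiregular (by omega) hH hA]
    · exact (hlt H hH).le
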